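/- arXiv:1509.00708 — 2 statements merged into one kernel-verified Lean document; each statement's English description precedes it below -/
import Mathlib

section
/- For periodic curl-free fields, line integrals across the periodicity cell coincide with the volume average: let F : ℝ³ → ℝ³ be a C¹ vector field which is ℤ³-periodic (F(y + k) = F(y) for all k ∈ ℤ³) and satisfies curl F = 0 on all of ℝ³. Then for every point (a, b) ∈ ℝ², ∫₀¹ F₃(a, b, t) dt = ∫_{[0,1]³} F₃(y) dy, i.e. the line integral of F along any straight segment parallel to e₃ connecting two points identified by periodicity equals the third component of the cell average of F. -/
/-!
Let `ℓ(x, y) = ∫₀¹ F₃(x, y, t) dt`. Differentiating under the integral sign and using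
`curl F = 0`, `∂ₓℓ = ∫₀¹ ∂₃F₁(x, y, t) dt = F₁(x, y, 1) - F₁(x, y, 0)`, which vanishes by
periodicity; likewise `∂_yℓ = 0`. Hence `ℓ` is constant, and by Fubini the integral of `F₃` over
the unit cell is the integral of `ℓ` over the unit square.
-/

open MeasureTheory

noncomputable section

/-- `V3` is the Euclidean space `ℝ³`, modelled as functions `Fin 3 → ℝ`. -/
abbrev V3 := Fin 3 → ℝ

/-- Partial derivative in the `i`-th coordinate direction of a real-valued function. -/
def pdR (i : Fin 3) (f : V3 → ℝ) (x : V3) : ℝ := fderiv ℝ f x (Pi.single i 1)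

/-- Curl of a real vector field on `ℝ³`. -/
def curlR (v : V3 → V3) (x : V3) : V3 :=
  ![pdR 1 (fun y => v y 2) x - pdR 2 (fun y => v y 1) x,
    pdR 2 (fun y => v y 0) x - pdR 0 (fun y => v y 2) x,
    pdR 0 (fun y => v y 1) x - pdR 1 (fun y => v y 0) x]

open Set

section LineIntegral

variable {E : Type*} [NormedAddCommGroup E] [NormedSpace ℝ E] {f g : E → ℝ}

theorem hasDerivAt_intervalIntegral_comp_add_smul (hf : ContDiff ℝ 1 f) (p u v : E)
    (a b s₀ : ℝ) :
    HasDerivAt (fun s => ∫ t in a..b, f (p + s • u + t • v))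
      (∫ t in a..b, fderiv ℝ f (p + s₀ • u + t • v) u) s₀ := by
  have hline : Continuous fun q : ℝ × ℝ => p + q.1 • u + q.2 • v := by fun_prop
  have hf' : Continuous fun q : ℝ × ℝ => fderiv ℝ f (p + q.1 • u + q.2 • v) u :=
    ((hf.continuous_fderiv one_ne_zero).comp hline).clm_apply continuous_const
  obtain ⟨C, hC⟩ := (isCompact_closedBall s₀ 1 |>.prod isCompact_uIcc).exists_bound_of_continuousOn
    hf'.continuousOn
  refine (intervalIntegral.hasDerivAt_integral_of_dominated_loc_of_deriv_le
    (F := fun s t => f (p + s • u + t • v)) (F' := fun s t => fderiv ℝ f (p + s • u + t • v) u)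
    (μ := volume) (bound := fun _ => C) (Metric.ball_mem_nhds s₀ one_pos) ?_ ?_ ?_ ?_
    intervalIntegrable_const ?_).2
  · exact .of_forall fun s =>
      (hf.continuous.comp (hline.comp (Continuous.prodMk_right s))).aestronglyMeasurable
  · exact (hf.continuous.comp (hline.comp (Continuous.prodMk_right s₀))).intervalIntegrable _ _
  · exact (hf'.comp (Continuous.prodMk_right s₀)).aestronglyMeasurable
  · exact .of_forall fun t ht s hs =>
      hC (s, t) ⟨Metric.ball_subset_closedBall hs, uIoc_subset_uIcc ht⟩
  · refine .of_forall fun t _ s _ => ?_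
    have hpath : HasDerivAt (fun s : ℝ => p + s • u + t • v) u s := by
      simpa using (((hasDerivAt_id s).smul_const u).const_add p).add_const (t • v)
    exact (hf.differentiable one_ne_zero _).hasFDerivAt.comp_hasDerivAt s hpath

theorem intervalIntegral_fderiv_comp_add_smul (hf : ContDiff ℝ 1 f) (q v : E) (a b : ℝ) :
    ∫ t in a..b, fderiv ℝ f (q + t • v) v = f (q + b • v) - f (q + a • v) := by
  have hpath : ∀ t : ℝ, HasDerivAt (fun t : ℝ => q + t • v) v t := fun t => by
    simpa using ((hasDerivAt_id t).smul_const v).const_add q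
  refine intervalIntegral.integral_eq_sub_of_hasDerivAt
    (fun t _ => (hf.differentiable one_ne_zero _).hasFDerivAt.comp_hasDerivAt t (hpath t)) ?_
  exact (((hf.continuous_fderiv one_ne_zero).comp (by fun_prop)).clm_apply
    continuous_const).intervalIntegrable _ _

theorem intervalIntegral_comp_add_smul_eq_of_fderiv_eq (hf : ContDiff ℝ 1 f)
    (hg : ContDiff ℝ 1 g) {u v : E} (hfg : ∀ x, fderiv ℝ f x u = fderiv ℝ g x v)
    (hper : ∀ x, g (x + v) = g x) (p : E) (s : ℝ) :
    ∫ t in (0 : ℝ)..1, f (p + s • u + t • v) = ∫ t in (0 : ℝ)..1, f (p + t • v) := by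
  have hderiv : ∀ s : ℝ,
      HasDerivAt (fun s => ∫ t in (0 : ℝ)..1, f (p + s • u + t • v)) (0 : ℝ) s := by
    intro s
    convert hasDerivAt_intervalIntegral_comp_add_smul hf p u v 0 1 s using 1
    simp_rw [hfg, intervalIntegral_fderiv_comp_add_smul hg, one_smul, zero_smul, add_zero, hper,
      sub_self]
  simpa using is_const_of_deriv_eq_zero (fun s => (hderiv s).differentiableAt)
    (fun s => (hderiv s).deriv) s 0

end LineIntegral

theorem setIntegral_unitCube_eq_of_forall_lineIntegral_eq {n : ℕ} (i : Fin (n + 1))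
    {φ : (Fin (n + 1) → ℝ) → ℝ} (hφ : IntegrableOn φ (univ.pi fun _ => Ioo 0 1)) {c : ℝ}
    (hline : ∀ w ∈ univ.pi fun _ : Fin n => Ioo (0 : ℝ) 1,
      ∫ t in Ioo (0 : ℝ) 1, φ (i.insertNth t w) = c) :
    ∫ y in univ.pi fun _ => Ioo (0 : ℝ) 1, φ y = c := by
  set e := MeasurableEquiv.piFinSuccAbove (fun _ : Fin (n + 1) => ℝ) i
  have he : MeasurePreserving e volume (volume.prod volume) :=
    volume_preserving_piFinSuccAbove _ i
  have hcube : (univ.pi fun _ => Ioo (0 : ℝ) 1) =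
      e ⁻¹' (Ioo (0 : ℝ) 1 ×ˢ univ.pi fun _ : Fin n => Ioo (0 : ℝ) 1) := by
    ext y
    simp [e, i.forall_iff_succAbove, Fin.removeNth]
  have hφe : IntegrableOn (φ ∘ e.symm) (Ioo (0 : ℝ) 1 ×ˢ univ.pi fun _ : Fin n => Ioo (0 : ℝ) 1)
      (volume.prod volume) := by
    rw [← he.integrableOn_comp_preimage e.measurableEmbedding]
    simpa [Function.comp_def, ← hcube] using hφ
  calc ∫ y in univ.pi fun _ => Ioo (0 : ℝ) 1, φ y
      = ∫ z in Ioo (0 : ℝ) 1 ×ˢ univ.pi fun _ : Fin n => Ioo (0 : ℝ) 1, φ (e.symm z)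
          ∂(volume.prod volume) := by
        rw [hcube, ← he.setIntegral_preimage_emb e.measurableEmbedding]
        simp
    _ = ∫ w in univ.pi fun _ : Fin n => Ioo (0 : ℝ) 1,
          ∫ t in Ioo (0 : ℝ) 1, φ (i.insertNth t w) := by
        rw [← Measure.prod_restrict, integral_prod_symm _ (by rwa [Measure.prod_restrict])]
        rfl
    _ = c := by
        rw [setIntegral_congr_fun (MeasurableSet.univ_pi fun _ => measurableSet_Ioo) hline]
        simp [Measure.real, Real.volume_pi_Ioo]

theorem pdR_comm_of_curlR_eq_zero {v : V3 → V3} {x : V3} (h : curlR v x = 0) (i j : Fin 3) :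
    pdR i (fun y => v y j) x = pdR j (fun y => v y i) x := by
  have h0 := congrFun h 0
  have h1 := congrFun h 1
  have h2 := congrFun h 2
  simp only [curlR, Matrix.cons_val, Pi.zero_apply] at h0 h1 h2
  fin_cases i <;> fin_cases j <;> dsimp only [Fin.reduceFinMk] <;> linarith

theorem intervalIntegral_vertical_eq_of_curlR_eq_zero {F : V3 → V3} (hF : ContDiff ℝ 1 F)
    (hper : ∀ y, F (y + Pi.single 2 1) = F y) (hcurl : ∀ y, curlR F y = 0) (x y a b : ℝ) :
    ∫ t in (0 : ℝ)..1, F ![x, y, t] 2 = ∫ t in (0 : ℝ)..1, F ![a, b, t] 2 := by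
  let e : Fin 3 → V3 := fun i => Pi.single i 1
  have hFi : ∀ i, ContDiff ℝ 1 fun y => F y i := contDiff_pi.mp hF
  have hclosed : ∀ i y, fderiv ℝ (fun y => F y 2) y (e i) = fderiv ℝ (fun y => F y i) y (e 2) :=
    fun i y => pdR_comm_of_curlR_eq_zero (hcurl y) i 2
  have hperi : ∀ i y, F (y + e 2) i = F y i := fun i y => by rw [hper]
  have hpoint : ∀ x y t : ℝ,
      (![x, y, t] : V3) = ![a, b, 0] + (x - a) • e 0 + (y - b) • e 1 + t • e 2 := by
    intro x y t; funext j; fin_cases j <;> simp [e, Matrix.vecHead, Matrix.vecTail]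
  calc ∫ t in (0 : ℝ)..1, F ![x, y, t] 2
      = ∫ t in (0 : ℝ)..1, F (![a, b, 0] + (x - a) • e 0 + (y - b) • e 1 + t • e 2) 2 := by
        simp only [hpoint x y]
    _ = ∫ t in (0 : ℝ)..1, F (![a, b, 0] + t • e 2) 2 := by
        rw [intervalIntegral_comp_add_smul_eq_of_fderiv_eq (hFi 2) (hFi 1) (hclosed 1) (hperi 1),
          intervalIntegral_comp_add_smul_eq_of_fderiv_eq (hFi 2) (hFi 0) (hclosed 0) (hperi 0)]
    _ = ∫ t in (0 : ℝ)..1, F ![a, b, t] 2 := intervalIntegral.integral_congr fun t _ => by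
        rw [hpoint a b t, sub_self, sub_self, zero_smul, zero_smul, add_zero, add_zero]

/-- For periodic curl-free `C¹` fields, the line integral along a segment parallel to `e₃`
connecting two points identified by periodicity equals the cell average of the
third component. -/
theorem line_integral_eq_cell_average
    (F : V3 → V3) (hF : ContDiff ℝ 1 F)
    (hper : ∀ (y : V3) (k : Fin 3 → ℤ), F (y + fun i => (k i : ℝ)) = F y)
    (hcurl : ∀ y, curlR F y = 0)
    (a b : ℝ) :
    (∫ t in Set.Ioo (0 : ℝ) 1, F ![a, b, t] 2)
      = ∫ y in Set.univ.pi fun _ : Fin 3 => Set.Ioo (0 : ℝ) 1, F y 2 := by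
  have hper₂ : ∀ y, F (y + Pi.single 2 1) = F y := fun y => by
    convert hper y (Pi.single 2 1) using 3
    funext j; fin_cases j <;> simp
  have hIoo : ∀ x y : ℝ,
      ∫ t in Ioo (0 : ℝ) 1, F ![x, y, t] 2 = ∫ t in (0 : ℝ)..1, F ![x, y, t] 2 := fun x y => by
    rw [intervalIntegral.integral_of_le zero_le_one, integral_Ioc_eq_integral_Ioo]
  have hint : IntegrableOn (fun y => F y 2) (univ.pi fun _ : Fin 3 => Ioo (0 : ℝ) 1) :=
    ((contDiff_pi.mp hF 2).continuous.continuousOn.integrableOn_compact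
      (isCompact_univ_pi fun _ => isCompact_Icc)).mono_set (pi_mono fun _ _ => Ioo_subset_Icc_self)
  refine (setIntegral_unitCube_eq_of_forall_lineIntegral_eq (Fin.last 2) hint fun w _ => ?_).symm
  have hw : ∀ t : ℝ, Fin.insertNth (Fin.last 2) t w = ![w 0, w 1, t] := fun t => by
    funext j; fin_cases j <;> rfl
  simp only [hw, hIoo, intervalIntegral_vertical_eq_of_curlR_eq_zero hF hper₂ hcurl _ _ a b]
end
end

section
/- Dirichlet energy comparison for cut-off modified potentials: let Y := (0,1)³, fix j ∈ {1,2,3}, and let Θ : ℝ³ → ℝ be a C¹ function with |Θ(y)| ≤ M for all y ∈ Y and A := ∫_Y |∇Θ(y)|² dy < ∞. Then for all C¹ functions Υ, Υ* : ℝ³ → ℝ with 0 ≤ Υ ≤ 1 and 0 ≤ Υ* ≤ 1 everywhere, setting d := ( ∫_Y (|1 − Υ|² + |∇Υ|²) )^{1/2} + ( ∫_Y (|1 − Υ*|² + |∇Υ*|²) )^{1/2}, the comparison function Θ̃(y) := Θ(y) Υ(y) − y_j (1 − Υ*(y)) satisfies ∫_Y |∇Θ̃(y)|² dy ≤ A +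 (M + 2) · d · ( 2√A + (M + 2) d ). In particular, if d ≤ δ for some δ ≤ 1, then ∫_Y |∇Θ̃|² ≤ ∫_Y |∇Θ|² + C δ with the constant C := (M + 2)(2√A + M + 2) depending only on M and A. -/
/-! The gradient of the comparison function splits as
`∇Θ̃ = Υ ∇Θ + Θ ∇Υ + y_j ∇Υ* + (Υ* - 1) e_j`.
On `Y` we have `|Υ| ≤ 1`, `|Θ| ≤ M` and `|y_j| ≤ 1`, so Minkowski's inequality in `L²(Y; ℝ³)` bounds
the `L²` norm of `∇Θ̃` by `√A + M d₁ + 2 d₂ ≤ √A + (M + 2) d`, where `d₁, d₂` are the two summands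
of `d`. Squaring gives the energy bound, and `d ≤ δ ≤ 1` turns it into the linear bound in `δ`. -/

open MeasureTheory

noncomputable section

/-- The open unit cell `Y = (0,1)³`. -/
def Ycell : Set V3 := Set.univ.pi fun _ : Fin 3 => Set.Ioo (0 : ℝ) 1

namespace MeasureTheory

section L2

variable {α E : Type*} [MeasurableSpace α] {μ : Measure α} [NormedAddCommGroup E]

theorem MemLp.sqrt_integral_norm_sq_eq {f : α → E} (hf : MemLp f 2 μ) :
    √(∫ x, ‖f x‖ ^ 2 ∂μ) = (eLpNorm f 2 μ).toReal := by
  rw [hf.eLpNorm_eq_integral_rpow_norm two_ne_zero ENNReal.ofNat_ne_top,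
    ENNReal.toReal_ofReal (by positivity), Real.sqrt_eq_rpow]
  norm_num

theorem sqrt_integral_norm_sq_add_le {f g : α → E} (hf : MemLp f 2 μ) (hg : MemLp g 2 μ) :
    √(∫ x, ‖f x + g x‖ ^ 2 ∂μ) ≤ √(∫ x, ‖f x‖ ^ 2 ∂μ) + √(∫ x, ‖g x‖ ^ 2 ∂μ) := by
  simp_rw [← Pi.add_apply f g]
  rw [(hf.add hg).sqrt_integral_norm_sq_eq, hf.sqrt_integral_norm_sq_eq,
    hg.sqrt_integral_norm_sq_eq, ← ENNReal.toReal_add hf.eLpNorm_ne_top hg.eLpNorm_ne_top]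
  exact ENNReal.toReal_mono (ENNReal.add_ne_top.2 ⟨hf.eLpNorm_ne_top, hg.eLpNorm_ne_top⟩)
    (eLpNorm_add_le hf.1 hg.1 one_le_two)

theorem sqrt_integral_norm_sq_le {f : α → E} {g : α → ℝ} (hg : Integrable g μ)
    (hfg : ∀ᵐ x ∂μ, ‖f x‖ ^ 2 ≤ g x) : √(∫ x, ‖f x‖ ^ 2 ∂μ) ≤ √(∫ x, g x ∂μ) :=
  Real.sqrt_le_sqrt (integral_mono_of_nonneg (ae_of_all _ fun _ => by positivity) hg hfg)

theorem sqrt_integral_norm_sq_le_mul {f : α → E} {g : α → ℝ} {c : ℝ} (hc : 0 ≤ c)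
    (hg : Integrable g μ) (hfg : ∀ᵐ x ∂μ, ‖f x‖ ^ 2 ≤ c ^ 2 * g x) :
    √(∫ x, ‖f x‖ ^ 2 ∂μ) ≤ c * √(∫ x, g x ∂μ) := by
  calc √(∫ x, ‖f x‖ ^ 2 ∂μ) ≤ √(∫ x, c ^ 2 * g x ∂μ) :=
        sqrt_integral_norm_sq_le (hg.const_mul _) hfg
    _ = c * √(∫ x, g x ∂μ) := by
        rw [integral_const_mul, Real.sqrt_mul (sq_nonneg c), Real.sqrt_sq hc]

end L2

end MeasureTheory

theorem Continuous.memLp_restrict_of_isBounded {X E : Type*} [PseudoMetricSpace X] [ProperSpace X]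
    [MeasurableSpace X] [OpensMeasurableSpace X] {μ : Measure X} [IsFiniteMeasureOnCompacts μ]
    [NormedAddCommGroup E] {f : X → E} (hf : Continuous f) {s : Set X}
    (hs : Bornology.IsBounded s) (p : ENNReal) : MemLp f p (μ.restrict s) := by
  have hK : IsCompact (closure s) := hs.isCompact_closure
  have : IsFiniteMeasure (μ.restrict (closure s)) :=
    isFiniteMeasure_restrict.2 hK.measure_lt_top.ne
  obtain ⟨C, hC⟩ := hK.exists_bound_of_continuousOn hf.continuousOn
  exact (MemLp.of_bound hf.aestronglyMeasurable C
    (ae_restrict_of_forall_mem isClosed_closure.measurableSet hC)).mono_measure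
    (Measure.restrict_mono subset_closure le_rfl)

def grad (f : V3 → ℝ) (y : V3) : EuclideanSpace ℝ (Fin 3) := WithLp.toLp 2 fun i => pdR i f y

theorem norm_grad_sq (f : V3 → ℝ) (y : V3) : ‖grad f y‖ ^ 2 = ∑ i, pdR i f y ^ 2 := by
  simp [grad, EuclideanSpace.norm_sq_eq]

theorem continuous_grad {f : V3 → ℝ} (hf : ContDiff ℝ 1 f) : Continuous (grad f) :=
  (PiLp.continuous_toLp 2 _).comp <| continuous_pi fun _ =>
    (hf.continuous_fderiv one_ne_zero).clm_apply continuous_const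

variable {f g : V3 → ℝ} {y : V3}

theorem grad_mul (hf : DifferentiableAt ℝ f y) (hg : DifferentiableAt ℝ g y) :
    grad (fun y => f y * g y) y = f y • grad g y + g y • grad f y := by
  have h : fderiv ℝ (fun y => f y * g y) y = f y • fderiv ℝ g y + g y • fderiv ℝ f y :=
    fderiv_mul hf hg
  ext i
  simp [grad, pdR, h]

theorem grad_sub (hf : DifferentiableAt ℝ f y) (hg : DifferentiableAt ℝ g y) :
    grad (fun y => f y - g y) y = grad f y - grad g y := by
  ext i
  simp [grad, pdR, fderiv_fun_sub hf hg]

theorem grad_const_sub (c : ℝ) : grad (fun y => c - f y) y = -grad f y := by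
  ext i
  simp [grad, pdR, fderiv_const_sub]

theorem grad_apply_coord (j : Fin 3) : grad (fun y : V3 => y j) y = EuclideanSpace.single j 1 := by
  ext i
  simp [grad, pdR, (hasFDerivAt_apply j y).fderiv, Pi.single_apply, eq_comm]

theorem grad_cutoff (j : Fin 3) {Θ Υ Υs : V3 → ℝ} (hΘ : Differentiable ℝ Θ)
    (hΥ : Differentiable ℝ Υ) (hΥs : Differentiable ℝ Υs) (y : V3) :
    grad (fun y => Θ y * Υ y - y j * (1 - Υs y)) y
      = Υ y • grad Θ y + Θ y • grad Υ y + y j • grad Υs y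
        + (Υs y - 1) • EuclideanSpace.single j 1 := by
  have hΘΥ : DifferentiableAt ℝ (fun y => Θ y * Υ y) y := (hΘ y).mul (hΥ y)
  have hcoord : DifferentiableAt ℝ (fun y : V3 => y j) y := differentiableAt_apply j y
  have hΥs' : DifferentiableAt ℝ (fun y => 1 - Υs y) y := (hΥs y).const_sub 1
  have hprod : DifferentiableAt ℝ (fun y => y j * (1 - Υs y)) y := hcoord.mul hΥs'
  rw [grad_sub hΘΥ hprod, grad_mul (hΘ y) (hΥ y), grad_mul hcoord hΥs',
    grad_const_sub, grad_apply_coord]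
  module

theorem measurableSet_Ycell : MeasurableSet Ycell :=
  (isOpen_set_pi Set.finite_univ fun _ _ => isOpen_Ioo).measurableSet

theorem isBounded_Ycell : Bornology.IsBounded Ycell :=
  (isCompact_univ_pi fun _ => isCompact_Icc (a := (0 : ℝ)) (b := 1)).isBounded.subset
    (Set.pi_mono fun _ _ => Set.Ioo_subset_Icc_self)

theorem const_half_mem_Ycell : (fun _ => 1 / 2 : V3) ∈ Ycell :=
  fun _ _ => ⟨by norm_num, by norm_num⟩

theorem abs_apply_le_one_of_mem_Ycell {y : V3} (hy : y ∈ Ycell) (j : Fin 3) : |y j| ≤ 1 :=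
  abs_le.2 ⟨by linarith [(hy j trivial).1], (hy j trivial).2.le⟩

theorem Continuous.memLp_Ycell {E : Type*} [NormedAddCommGroup E] {f : V3 → E}
    (hf : Continuous f) (p : ENNReal) : MemLp f p (volume.restrict Ycell) :=
  hf.memLp_restrict_of_isBounded isBounded_Ycell p

theorem Continuous.integrableOn_Ycell {f : V3 → ℝ} (hf : Continuous f) :
    IntegrableOn f Ycell :=
  memLp_one_iff_integrable.1 (hf.memLp_Ycell 1)

theorem sqrt_integral_norm_grad_cutoff_sq_le (j : Fin 3) {Θ Υ Υs : V3 → ℝ}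
    (hΘ : ContDiff ℝ 1 Θ) (hΥ : ContDiff ℝ 1 Υ) (hΥs : ContDiff ℝ 1 Υs) {M : ℝ} (hM0 : 0 ≤ M)
    (hM : ∀ y ∈ Ycell, |Θ y| ≤ M) (hΥb : ∀ y ∈ Ycell, |Υ y| ≤ 1) :
    √(∫ y in Ycell, ‖grad (fun y => Θ y * Υ y - y j * (1 - Υs y)) y‖ ^ 2)
      ≤ √(∫ y in Ycell, ‖grad Θ y‖ ^ 2)
        + M * √(∫ y in Ycell, ((1 - Υ y) ^ 2 + ‖grad Υ y‖ ^ 2))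
        + 2 * √(∫ y in Ycell, ((1 - Υs y) ^ 2 + ‖grad Υs y‖ ^ 2)) := by
  have hΘc := continuous_grad hΘ
  have hΥc := continuous_grad hΥ
  have hΥsc := continuous_grad hΥs
  have hΥsI : Integrable (fun y => (1 - Υs y) ^ 2 + ‖grad Υs y‖ ^ 2) (volume.restrict Ycell) :=
    (((continuous_const.sub hΥs.continuous).pow 2).add (hΥsc.norm.pow 2)).integrableOn_Ycell
  have h₁ : √(∫ y in Ycell, ‖Υ y • grad Θ y‖ ^ 2) ≤ √(∫ y in Ycell, ‖grad Θ y‖ ^ 2) := by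
    refine sqrt_integral_norm_sq_le (hΘc.norm.pow 2).integrableOn_Ycell
      (ae_restrict_of_forall_mem measurableSet_Ycell fun y hy => ?_)
    rw [norm_smul, mul_pow, Real.norm_eq_abs]
    exact mul_le_of_le_one_left (by positivity) (pow_le_one₀ (abs_nonneg _) (hΥb y hy))
  have h₂ : √(∫ y in Ycell, ‖Θ y • grad Υ y‖ ^ 2)
      ≤ M * √(∫ y in Ycell, ((1 - Υ y) ^ 2 + ‖grad Υ y‖ ^ 2)) := by
    refine sqrt_integral_norm_sq_le_mul hM0
      (((continuous_const.sub hΥ.continuous).pow 2).add (hΥc.norm.pow 2)).integrableOn_Ycell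
      (ae_restrict_of_forall_mem measurableSet_Ycell fun y hy => ?_)
    rw [norm_smul, mul_pow, Real.norm_eq_abs]
    gcongr
    · exact hM y hy
    · exact le_add_of_nonneg_left (sq_nonneg _)
  have h₃ : √(∫ y in Ycell, ‖y j • grad Υs y‖ ^ 2)
      ≤ √(∫ y in Ycell, ((1 - Υs y) ^ 2 + ‖grad Υs y‖ ^ 2)) := by
    refine sqrt_integral_norm_sq_le hΥsI
      (ae_restrict_of_forall_mem measurableSet_Ycell fun y hy => ?_)
    rw [norm_smul, mul_pow, Real.norm_eq_abs]
    calc |y j| ^ 2 * ‖grad Υs y‖ ^ 2 ≤ ‖grad Υs y‖ ^ 2 :=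
          mul_le_of_le_one_left (by positivity)
            (pow_le_one₀ (abs_nonneg _) (abs_apply_le_one_of_mem_Ycell hy j))
      _ ≤ (1 - Υs y) ^ 2 + ‖grad Υs y‖ ^ 2 := le_add_of_nonneg_left (sq_nonneg _)
  have h₄ : √(∫ y in Ycell, ‖(Υs y - 1) • EuclideanSpace.single j (1 : ℝ)‖ ^ 2)
      ≤ √(∫ y in Ycell, ((1 - Υs y) ^ 2 + ‖grad Υs y‖ ^ 2)) := by
    refine sqrt_integral_norm_sq_le hΥsI
      (ae_restrict_of_forall_mem measurableSet_Ycell fun y _ => ?_)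
    rw [norm_smul, PiLp.norm_single, norm_one, mul_one, Real.norm_eq_abs, sq_abs, ← neg_sub,
      neg_sq]
    exact le_add_of_nonneg_right (sq_nonneg _)
  have hm₁ : MemLp (fun y => Υ y • grad Θ y) 2 (volume.restrict Ycell) :=
    (hΥ.continuous.smul hΘc).memLp_Ycell 2
  have hm₂ : MemLp (fun y => Θ y • grad Υ y) 2 (volume.restrict Ycell) :=
    (hΘ.continuous.smul hΥc).memLp_Ycell 2
  have hm₃ : MemLp (fun y : V3 => y j • grad Υs y) 2 (volume.restrict Ycell) :=
    ((continuous_apply j).smul hΥsc).memLp_Ycell 2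
  have hm₄ : MemLp (fun y => (Υs y - 1) • EuclideanSpace.single j (1 : ℝ)) 2
      (volume.restrict Ycell) :=
    ((hΥs.continuous.sub continuous_const).smul continuous_const).memLp_Ycell 2
  simp_rw [grad_cutoff j (hΘ.differentiable one_ne_zero) (hΥ.differentiable one_ne_zero)
    (hΥs.differentiable one_ne_zero)]
  set a : V3 → EuclideanSpace ℝ (Fin 3) := fun y => Υ y • grad Θ y
  set b : V3 → EuclideanSpace ℝ (Fin 3) := fun y => Θ y • grad Υ y
  set c : V3 → EuclideanSpace ℝ (Fin 3) := fun y => y j • grad Υs y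
  set e : V3 → EuclideanSpace ℝ (Fin 3) := fun y => (Υs y - 1) • EuclideanSpace.single j 1
  have t₁ := sqrt_integral_norm_sq_add_le (f := fun y => a y + b y + c y)
    ((hm₁.add hm₂).add hm₃) hm₄
  have t₂ := sqrt_integral_norm_sq_add_le (f := fun y => a y + b y) (hm₁.add hm₂) hm₃
  have t₃ := sqrt_integral_norm_sq_add_le hm₁ hm₂
  linarith

theorem le_add_mul_of_sqrt_le_sqrt_add {x a t : ℝ} (hx : 0 ≤ x) (ha : 0 ≤ a)
    (h : √x ≤ √a + t) : x ≤ a + t * (2 * √a + t) := by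
  calc x = √x ^ 2 := (Real.sq_sqrt hx).symm
    _ ≤ (√a + t) ^ 2 := by gcongr
    _ = a + t * (2 * √a + t) := by rw [add_sq, Real.sq_sqrt ha]; ring

theorem dirichlet_energy_comparison_general
    (j : Fin 3) (Θ : V3 → ℝ) (hΘ : ContDiff ℝ 1 Θ)
    (M : ℝ) (hM : ∀ y ∈ Ycell, |Θ y| ≤ M)
    (A : ℝ) (hA : A = ∫ y in Ycell, ∑ i, (pdR i Θ y) ^ 2)
    (Υ Υs : V3 → ℝ) (hΥ : ContDiff ℝ 1 Υ) (hΥs : ContDiff ℝ 1 Υs)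
    (hΥb : ∀ y, 0 ≤ Υ y ∧ Υ y ≤ 1)
    (d : ℝ)
    (hd : d = Real.sqrt (∫ y in Ycell, ((1 - Υ y) ^ 2 + ∑ i, (pdR i Υ y) ^ 2))
            + Real.sqrt (∫ y in Ycell, ((1 - Υs y) ^ 2 + ∑ i, (pdR i Υs y) ^ 2)))
    (Θt : V3 → ℝ) (hΘt : Θt = fun y => Θ y * Υ y - y j * (1 - Υs y)) :
    (∫ y in Ycell, ∑ i, (pdR i Θt y) ^ 2)
        ≤ A + (M + 2) * d * (2 * Real.sqrt A + (M + 2) * d) ∧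
    ∀ δ : ℝ, δ ≤ 1 → d ≤ δ →
      (∫ y in Ycell, ∑ i, (pdR i Θt y) ^ 2)
        ≤ (∫ y in Ycell, ∑ i, (pdR i Θ y) ^ 2)
          + (M + 2) * (2 * Real.sqrt A + M + 2) * δ := by
  simp only [← norm_grad_sq] at hA hd ⊢
  rw [← hA]
  have hM0 : 0 ≤ M := (abs_nonneg _).trans (hM _ const_half_mem_Ycell)
  have hA0 : 0 ≤ A := hA ▸ setIntegral_nonneg measurableSet_Ycell fun _ _ => by positivity
  have hd0 : 0 ≤ d := hd ▸ by positivity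
  have hsqrt : √(∫ y in Ycell, ‖grad Θt y‖ ^ 2) ≤ √A + (M + 2) * d := by
    have := sqrt_integral_norm_grad_cutoff_sq_le j hΘ hΥ hΥs hM0 hM
      fun y _ => abs_le.2 ⟨by linarith [hΥb y], (hΥb y).2⟩
    rw [hΘt, hA, hd]
    nlinarith [Real.sqrt_nonneg (∫ y in Ycell, ((1 - Υ y) ^ 2 + ‖grad Υ y‖ ^ 2)),
      Real.sqrt_nonneg (∫ y in Ycell, ((1 - Υs y) ^ 2 + ‖grad Υs y‖ ^ 2))]
  have hbound := le_add_mul_of_sqrt_le_sqrt_add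
    (setIntegral_nonneg measurableSet_Ycell fun _ _ => by positivity) hA0 hsqrt
  refine ⟨hbound, fun δ hδ hdδ => hbound.trans ?_⟩
  have hMδ : 0 ≤ (M + 2) * δ := mul_nonneg (by linarith) (hd0.trans hdδ)
  calc A + (M + 2) * d * (2 * √A + (M + 2) * d)
      ≤ A + (M + 2) * δ * (2 * √A + (M + 2) * 1) := by gcongr; linarith
    _ = A + (M + 2) * (2 * √A + M + 2) * δ := by ring

/-- Dirichlet energy comparison for cut-off modified potentials. -/
theorem dirichlet_energy_comparison
    (j : Fin 3) (Θ : V3 → ℝ) (hΘ : ContDiff ℝ 1 Θ)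
    (M : ℝ) (hM : ∀ y ∈ Ycell, |Θ y| ≤ M)
    (A : ℝ) (hA : A = ∫ y in Ycell, ∑ i, (pdR i Θ y) ^ 2)
    (hAfin : IntegrableOn (fun y => ∑ i, (pdR i Θ y) ^ 2) Ycell volume)
    (Υ Υs : V3 → ℝ) (hΥ : ContDiff ℝ 1 Υ) (hΥs : ContDiff ℝ 1 Υs)
    (hΥb : ∀ y, 0 ≤ Υ y ∧ Υ y ≤ 1) (hΥsb : ∀ y, 0 ≤ Υs y ∧ Υs y ≤ 1)
    (d : ℝ)
    (hd : d = Real.sqrt (∫ y in Ycell, ((1 - Υ y) ^ 2 + ∑ i, (pdR i Υ y) ^ 2))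
            + Real.sqrt (∫ y in Ycell, ((1 - Υs y) ^ 2 + ∑ i, (pdR i Υs y) ^ 2)))
    (Θt : V3 → ℝ) (hΘt : Θt = fun y => Θ y * Υ y - y j * (1 - Υs y)) :
    (∫ y in Ycell, ∑ i, (pdR i Θt y) ^ 2)
        ≤ A + (M + 2) * d * (2 * Real.sqrt A + (M + 2) * d) ∧
    ∀ δ : ℝ, δ ≤ 1 → d ≤ δ →
      (∫ y in Ycell, ∑ i, (pdR i Θt y) ^ 2)
        ≤ (∫ y in Ycell, ∑ i, (pdR i Θ y) ^ 2)
          + (M + 2) * (2 * Real.sqrt A + M + 2) * δ :=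
  dirichlet_energy_comparison_general j Θ hΘ M hM A hA Υ Υs hΥ hΥs hΥb d hd Θt hΘt
end
end
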